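/- Let A ∈ M_n and α ∈ [0, π/2). If the numerical range W(A) is contained in the sector S_α = {z ∈ ℂ : Re z ≥ 0, |Im z| ≤ (Re z) tan α}, then the block matrix [[sec(α)·Re A, A*],[A, sec(α)·Re A]] is positive semidefinite. -/

import Mathlib

open Matrix Set ComplexOrder

variable {m : Type*}

/-- The modulus `|X| = (XᴴX)^{1/2}` of a matrix. -/
noncomputable def matAbs [Fintype m] [DecidableEq m] (X : Matrix m m ℂ) : Matrix m m ℂ :=
  ((Matrix.posSemidef_conjTranspose_mul_self X).isHermitian.eigenvectorUnitary : Matrix m m ℂ) *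
    Matrix.diagonal (fun i => ((Real.sqrt
      ((Matrix.posSemidef_conjTranspose_mul_self X).isHermitian.eigenvalues i) : ℝ) : ℂ)) *
    star ((Matrix.posSemidef_conjTranspose_mul_self X).isHermitian.eigenvectorUnitary : Matrix m m ℂ)

theorem matAbs_posSemidef [Fintype m] [DecidableEq m] (X : Matrix m m ℂ) :
    (matAbs X).PosSemidef :=
  (Matrix.posSemidef_diagonal_iff.mpr (fun i => Complex.zero_le_real.mpr (Real.sqrt_nonneg _))).mul_mul_conjTranspose_same _

/-- Functional calculus: apply `f : ℝ → ℝ` to a Hermitian matrix via its spectral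
decomposition (junk value `0` for non-Hermitian input). -/
noncomputable def matFun [Fintype m] [DecidableEq m] (f : ℝ → ℝ) (X : Matrix m m ℂ) :
    Matrix m m ℂ :=
  if h : X.IsHermitian then
    (h.eigenvectorUnitary : Matrix m m ℂ) *
      Matrix.diagonal (fun i => (f (h.eigenvalues i) : ℂ)) *
      star (h.eigenvectorUnitary : Matrix m m ℂ)
  else 0

/-- Real part `Re A = (A + Aᴴ)/2`. -/
noncomputable def reM (A : Matrix m m ℂ) : Matrix m m ℂ := (1/2 : ℂ) • (A + Aᴴ)

/-- Imaginary part `Im A = (A - Aᴴ)/(2i)`. -/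
noncomputable def imM (A : Matrix m m ℂ) : Matrix m m ℂ := (1/(2*Complex.I)) • (A - Aᴴ)

/-- Numerical range `W(A) = {x* A x : x*x = 1}`. -/
def numRange [Fintype m] (A : Matrix m m ℂ) : Set ℂ :=
  {z | ∃ x : m → ℂ, star x ⬝ᵥ x = 1 ∧ z = star x ⬝ᵥ A.mulVec x}

/-- The sector `S_α = {z : Re z ≥ 0, |Im z| ≤ (Re z) tan α}`. -/
def sector (α : ℝ) : Set ℂ := {z | 0 ≤ z.re ∧ |z.im| ≤ z.re * Real.tan α}

/-!
Write `H = Re A`, `K = Im A` and `t = tan α`, `s = sec α`, so that `s² = 1 + t²`. The sector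
condition says that `P = tH + K` and `M = tH - K` are positive semidefinite, and the block matrix
is `[[s, 1], [1, s]] ⊗ H + [[0, -i], [i, 0]] ⊗ K`. For `t > 0` it equals
`(2t)⁻¹ (D₊ ⊗ P + D₋ ⊗ M)` with `D± = [[s, 1 ∓ it], [1 ± it, s]]`, which are positive
semidefinite of rank one since `det D± = s² - 1 - t² = 0`. The case `t = 0` follows by letting
`s` decrease to `1`, since the sector condition only weakens as `t` grows.
-/

lemma ofReal_mul_mem_sector {α r : ℝ} {z : ℂ} (hr : 0 ≤ r) (hz : z ∈ sector α) :
    (r : ℂ) * z ∈ sector α := by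
  obtain ⟨hre, him⟩ := hz
  refine ⟨by simpa using mul_nonneg hr hre, ?_⟩
  simpa [abs_mul, abs_of_nonneg hr, mul_assoc] using mul_le_mul_of_nonneg_left him hr

open Complex in
lemma re_mul_nonneg_of_abs_im_le {t : ℝ} {z : ℂ} (h : |z.im| ≤ z.re * t) :
    0 ≤ ((t - I) * z).re ∧ 0 ≤ ((t + I) * z).re := by
  obtain ⟨h₁, h₂⟩ := abs_le.mp h
  simp only [mul_re, sub_re, add_re, ofReal_re, I_re, sub_im, add_im, ofReal_im, I_im]
  constructor <;> linarith

namespace Matrix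

variable {ι κ R : Type*} [Fintype ι]

lemma star_dotProduct_conjTranspose_mulVec [Fintype κ] [CommSemiring R] [StarRing R]
    (A : Matrix κ ι R) (x : ι → R) (y : κ → R) :
    star x ⬝ᵥ Aᴴ *ᵥ y = star (star y ⬝ᵥ A *ᵥ x) := by
  rw [← star_dotProduct_star, star_star, star_mulVec, dotProduct_mulVec]

lemma star_smul_add_smul_dotProduct_mulVec [CommSemiring R] [StarRing R]
    (A : Matrix ι ι R) (a b : R) (x y : ι → R) :
    star (a • x + b • y) ⬝ᵥ A *ᵥ (a • x + b • y) =
      star a * a * (star x ⬝ᵥ A *ᵥ x) + star a * b * (star x ⬝ᵥ A *ᵥ y) +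
        star b * a * (star y ⬝ᵥ A *ᵥ x) + star b * b * (star y ⬝ᵥ A *ᵥ y) := by
  simp only [star_add, star_smul, mulVec_add, mulVec_smul, add_dotProduct, dotProduct_add,
    smul_dotProduct, dotProduct_smul, smul_eq_mul]
  ring

lemma star_sumElim_dotProduct_fromBlocks_mulVec [Fintype κ] (P : Matrix ι ι ℂ)
    (Q : Matrix κ κ ℂ) (B : Matrix κ ι ℂ) (x : ι → ℂ) (y : κ → ℂ) :
    star (Sum.elim x y) ⬝ᵥ fromBlocks P Bᴴ B Q *ᵥ Sum.elim x y =
      star x ⬝ᵥ P *ᵥ x + star y ⬝ᵥ Q *ᵥ y + 2 * (star y ⬝ᵥ B *ᵥ x).re := by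
  simp only [Function.star_sumElim, fromBlocks_mulVec, sumElim_dotProduct_sumElim,
    Sum.elim_comp_inl, Sum.elim_comp_inr, dotProduct_add]
  rw [star_dotProduct_conjTranspose_mulVec, Complex.star_def]
  have h := Complex.add_conj (star y ⬝ᵥ B *ᵥ x)
  push_cast at h
  linear_combination h

lemma isHermitian_reM {m : Type*} (A : Matrix m m ℂ) : (reM A).IsHermitian :=
  (isHermitian_add_transpose_self A).smul (by simp [IsSelfAdjoint])

lemma star_dotProduct_reM_mulVec_self (A : Matrix ι ι ℂ) (x : ι → ℂ) :
    star x ⬝ᵥ reM A *ᵥ x = (star x ⬝ᵥ A *ᵥ x).re := by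
  rw [reM, smul_mulVec, dotProduct_smul, add_mulVec, dotProduct_add,
    star_dotProduct_conjTranspose_mulVec, Complex.star_def, Complex.add_conj, smul_eq_mul]
  push_cast
  ring

lemma star_dotProduct_mulVec_mem_of_numRange_subset {A : Matrix ι ι ℂ} {C : Set ℂ}
    (h0 : 0 ∈ C) (hC : ∀ r : ℝ, 0 ≤ r → ∀ z ∈ C, (r : ℂ) * z ∈ C) (hA : numRange A ⊆ C)
    (x : ι → ℂ) : star x ⬝ᵥ A *ᵥ x ∈ C := by
  rcases eq_or_ne x 0 with rfl | hx
  · simpa using h0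
  obtain ⟨N, hN, hxN⟩ := RCLike.pos_iff_exists_ofReal.mp (dotProduct_star_self_pos_iff.mpr hx)
  change (N : ℂ) = _ at hxN
  set c : ℂ := (((√N)⁻¹ : ℝ) : ℂ)
  have hc : star c * c = (N⁻¹ : ℝ) := by
    simp only [c, Complex.star_def, Complex.conj_ofReal, ← Complex.ofReal_mul]
    rw [← mul_inv, Real.mul_self_sqrt hN.le]
  have hunit : star (c • x) ⬝ᵥ (c • x) = 1 := by
    rw [star_smul, smul_dotProduct, dotProduct_smul, ← hxN, smul_eq_mul, smul_eq_mul,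
      ← mul_assoc, hc, ← Complex.ofReal_mul, inv_mul_cancel₀ hN.ne', Complex.ofReal_one]
  convert hC N hN.le _ (hA ⟨c • x, hunit, rfl⟩) using 1
  rw [mulVec_smul, star_smul, smul_dotProduct, dotProduct_smul, smul_eq_mul, smul_eq_mul,
    ← mul_assoc (star c), hc, ← mul_assoc, ← Complex.ofReal_mul, mul_inv_cancel₀ hN.ne',
    Complex.ofReal_one, one_mul]

open Complex in
lemma sectorial_block_form_nonneg_of_pos {A : Matrix ι ι ℂ} {t s : ℝ} (ht : 0 < t) (hs₀ : 0 < s)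
    (hs : s ^ 2 = 1 + t ^ 2) (hA : ∀ u, |(star u ⬝ᵥ A *ᵥ u).im| ≤ (star u ⬝ᵥ A *ᵥ u).re * t)
    (x y : ι → ℂ) :
    0 ≤ s * ((star x ⬝ᵥ A *ᵥ x).re + (star y ⬝ᵥ A *ᵥ y).re) + 2 * (star y ⬝ᵥ A *ᵥ x).re := by
  -- `s D₊ = w w*` for `w = (s, 1 + it)`, so the form of `D₊ ⊗ P` at `(x, y)` is `⟪u, P u⟫ / s`;
  -- likewise `u'` for `D₋ ⊗ M`.
  set u := (s : ℂ) • x + (1 - t * I) • y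
  set u' := (s : ℂ) • x + (1 + t * I) • y
  have key : (t - I) * (star u ⬝ᵥ A *ᵥ u) + (t + I) * (star u' ⬝ᵥ A *ᵥ u') =
      (2 * t * s : ℝ) *
        (s * ((star x ⬝ᵥ A *ᵥ x) + (star y ⬝ᵥ A *ᵥ y)) + 2 * (star y ⬝ᵥ A *ᵥ x)) := by
    have hsC : (s : ℂ) ^ 2 = 1 + t ^ 2 := by exact_mod_cast hs
    simp only [u, u', star_smul_add_smul_dotProduct_mulVec, star_def, conj_ofReal, map_sub,
      map_add, map_mul, conj_I, map_one]
    push_cast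
    linear_combination (2 * t * s * (star x ⬝ᵥ A *ᵥ y) - 2 * t * s * (star y ⬝ᵥ A *ᵥ x)
      - 2 * t ^ 3 * (star y ⬝ᵥ A *ᵥ y)) * I_sq - 2 * t * (star y ⬝ᵥ A *ᵥ y) * hsC
  have hsum := add_nonneg (re_mul_nonneg_of_abs_im_le (hA u)).1
    (re_mul_nonneg_of_abs_im_le (hA u')).2
  rw [← add_re, key] at hsum
  simp only [add_re, mul_re, ofReal_re, ofReal_im, re_ofNat, im_ofNat, zero_mul, sub_zero]
    at hsum
  exact (mul_nonneg_iff_of_pos_left (show 0 < 2 * t * s by positivity)).mp hsum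

open Filter Topology in
lemma sectorial_block_form_nonneg {A : Matrix ι ι ℂ} {t s : ℝ} (ht : 0 ≤ t) (hs₀ : 0 ≤ s)
    (hs : s ^ 2 = 1 + t ^ 2)
    (hA : ∀ u, 0 ≤ (star u ⬝ᵥ A *ᵥ u).re ∧ |(star u ⬝ᵥ A *ᵥ u).im| ≤ (star u ⬝ᵥ A *ᵥ u).re * t)
    (x y : ι → ℂ) :
    0 ≤ s * ((star x ⬝ᵥ A *ᵥ x).re + (star y ⬝ᵥ A *ᵥ y).re) + 2 * (star y ⬝ᵥ A *ᵥ x).re := by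
  set a := (star x ⬝ᵥ A *ᵥ x).re + (star y ⬝ᵥ A *ᵥ y).re
  set b := 2 * (star y ⬝ᵥ A *ᵥ x).re
  have h_gt : ∀ s' ∈ Ioi s, 0 ≤ s' * a + b := by
    intro s' (hs' : s < s')
    have ht' : t ≤ √(s' ^ 2 - 1) := (Real.le_sqrt ht (by nlinarith)).2 (by nlinarith)
    refine sectorial_block_form_nonneg_of_pos (t := √(s' ^ 2 - 1)) (s := s')
      (Real.sqrt_pos.2 (by nlinarith)) (by linarith) (by rw [Real.sq_sqrt (by nlinarith)]; ring)
      (fun u => ?_) x y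
    exact (hA u).2.trans (mul_le_mul_of_nonneg_left ht' (hA u).1)
  have h_lim : Tendsto (fun s' => s' * a + b) (𝓝[>] s) (𝓝 (s * a + b)) :=
    (Continuous.tendsto (by fun_prop) s).mono_left nhdsWithin_le_nhds
  exact ge_of_tendsto h_lim (eventually_nhdsWithin_of_forall h_gt)

end Matrix

theorem sector_implies_sec_block_psd {n : ℕ} (A : Matrix (Fin n) (Fin n) ℂ) (α : ℝ)
    (hα₀ : 0 ≤ α) (hα₁ : α < Real.pi / 2) (hA : numRange A ⊆ sector α) :
    (Matrix.fromBlocks ((Real.cos α)⁻¹ • reM A) Aᴴ A ((Real.cos α)⁻¹ • reM A)).PosSemidef := by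
  have hcos : 0 < Real.cos α := Real.cos_pos_of_mem_Ioo ⟨by linarith [Real.pi_pos], hα₁⟩
  have htan : 0 ≤ Real.tan α := Real.tan_nonneg_of_nonneg_of_le_pi_div_two hα₀ hα₁.le
  have hsec : (Real.cos α)⁻¹ ^ 2 = 1 + Real.tan α ^ 2 := by
    rw [inv_pow, ← Real.inv_one_add_tan_sq hcos.ne', inv_inv]
  have hW : ∀ u, star u ⬝ᵥ A *ᵥ u ∈ sector α :=
    star_dotProduct_mulVec_mem_of_numRange_subset (by simp [sector])
      (fun _ hr _ hz => ofReal_mul_mem_sector hr hz) hA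
  have hre : ((Real.cos α)⁻¹ • reM A).IsHermitian := (isHermitian_reM A).smul (.all _)
  refine .of_dotProduct_mulVec_nonneg
    (isHermitian_fromBlocks_iff.2 ⟨hre, conjTranspose_conjTranspose A, rfl, hre⟩) fun v => ?_
  rw [← Sum.elim_comp_inl_inr v, star_sumElim_dotProduct_fromBlocks_mulVec, smul_mulVec,
    smul_mulVec, dotProduct_smul, dotProduct_smul, star_dotProduct_reM_mulVec_self,
    star_dotProduct_reM_mulVec_self, Complex.real_smul, Complex.real_smul]
  norm_cast
  linear_combination
    sectorial_block_form_nonneg htan (inv_nonneg.2 hcos.le) hsec hW (v ∘ Sum.inl) (v ∘ Sum.inr)
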